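/- arXiv:2204.02657 — 4 statements merged into one kernel-verified Lean document; each statement's English description precedes it below -/
import Mathlib

section
/- Let Y, Z, W, X be random variables on a probability space (Ω, ℱ, P). Suppose (i) Y and Z are conditionally independent given σ(W,X), and (ii) the completeness condition holds: every integrable σ(W,X)-measurable random variable φ with E[φ | σ(Z,X)] = 0 almost surely satisfies φ = 0 almost surely. Then for every bounded measurable function g, the conditional expectation E[g(Y) | σ(W,X)] is the almost-surely unique integrable σ(W,X)-measurable random variable h satisfying E[h | σ(Z,X)] = E[g(Y) | σ(Z,X)] almost surely; that is, any such h equals E[g(Y) | σ(W,X)] almost surely. -/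
open MeasureTheory

/-- Conditional independence of `f` and `g` given the sub-σ-algebra `m`:
for all measurable sets `A`, `B`, a.s.
`P(f ∈ A, g ∈ B | m) = P(f ∈ A | m) · P(g ∈ B | m)`. -/
def CondIndepGiven {Ω α β : Type*} [MeasurableSpace Ω] [MeasurableSpace α] [MeasurableSpace β]
    (μ : Measure Ω) (m : MeasurableSpace Ω) (f : Ω → α) (g : Ω → β) : Prop :=
  ∀ (A : Set α) (B : Set β), MeasurableSet A → MeasurableSet B →
    μ[fun ω => A.indicator (fun _ => (1 : ℝ)) (f ω) * B.indicator (fun _ => (1 : ℝ)) (g ω) | m]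
      =ᵐ[μ]
    fun ω => (μ[fun ω' => A.indicator (fun _ => (1 : ℝ)) (f ω') | m]) ω *
             (μ[fun ω' => B.indicator (fun _ => (1 : ℝ)) (g ω') | m]) ω

/-!
Conditional independence makes `E[g(Y) | m]`, `m = σ(W, X)`, integrate like `g(Y)` over every
set `{Z ∈ B} ∩ t` with `t ∈ m`. Pulling `m`-measurable factors out of the conditional expectation
reduces this to the equality of the images under `Y` of the weighted measures
`E[1_{Z ∈ B} | m] dμ` and `1_{Z ∈ B} dμ` restricted to `t`, and on indicators of `Y` that equality
is exactly the defining identity of conditional independence. Taking `t = {X ∈ D}` these sets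
are the rectangles generating `σ(Z, X)`, so `E[E[g(Y) | m] | σ(Z, X)] = E[g(Y) | σ(Z, X)]`, and
completeness applied to `h - E[g(Y) | m]` gives the claim.
-/

section

variable {Ω α : Type*} {m m0 : MeasurableSpace Ω} {μ : Measure Ω} [MeasurableSpace α]

theorem integral_comp_mul_eq_of_forall_indicator {Y : Ω → α} (hY : Measurable Y)
    {ρ₁ ρ₂ : Ω → ℝ} (hρ₁ : Integrable ρ₁ μ) (hρ₂ : Integrable ρ₂ μ)
    (hρ₁_nonneg : 0 ≤ᵐ[μ] ρ₁) (hρ₂_nonneg : 0 ≤ᵐ[μ] ρ₂)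
    (h : ∀ A, MeasurableSet A →
      ∫ ω, A.indicator 1 (Y ω) * ρ₁ ω ∂μ = ∫ ω, A.indicator 1 (Y ω) * ρ₂ ω ∂μ)
    {g : α → ℝ} (hg : Measurable g) :
    ∫ ω, g (Y ω) * ρ₁ ω ∂μ = ∫ ω, g (Y ω) * ρ₂ ω ∂μ := by
  -- Each side integrates `g` against the finite measure `Y₊(ρ μ)`; `h` identifies the two measures.
  have integral_eq {ρ : Ω → ℝ} (hρ : Integrable ρ μ) (hρ_nonneg : 0 ≤ᵐ[μ] ρ)
      {f : α → ℝ} (hf : Measurable f) : ∫ ω, f (Y ω) * ρ ω ∂μ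
        = ∫ y, f y ∂(μ.withDensity fun ω => ENNReal.ofReal (ρ ω)).map Y := by
    rw [integral_map hY.aemeasurable hf.aestronglyMeasurable,
      integral_withDensity_eq_integral_toReal_smul₀ hρ.1.aemeasurable.ennreal_ofReal
        (ae_of_all _ fun _ => ENNReal.ofReal_lt_top)]
    refine integral_congr_ae (hρ_nonneg.mono fun ω hω => ?_)
    simp [ENNReal.toReal_ofReal hω, mul_comm]
  have := isFiniteMeasure_withDensity_ofReal hρ₁.2
  have := isFiniteMeasure_withDensity_ofReal hρ₂.2
  rw [integral_eq hρ₁ hρ₁_nonneg hg, integral_eq hρ₂ hρ₂_nonneg hg]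
  congr 1
  ext A hA
  rw [← measureReal_eq_measureReal_iff (measure_ne_top _ _) (measure_ne_top _ _),
    ← integral_indicator_one hA, ← integral_indicator_one hA,
    ← integral_eq hρ₁ hρ₁_nonneg (measurable_one.indicator hA),
    ← integral_eq hρ₂ hρ₂_nonneg (measurable_one.indicator hA)]
  exact h A hA

theorem setIntegral_condExp_mul (hm : m ≤ m0) [SigmaFinite (μ.trim hm)] {t : Set Ω}
    (ht : MeasurableSet[m] t) {f φ : Ω → ℝ}
    (hφ : AEStronglyMeasurable[m] φ μ) (hfφ : Integrable (f * φ) μ) (hf : Integrable f μ) :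
    ∫ ω in t, μ[f|m] ω * φ ω ∂μ = ∫ ω in t, f ω * φ ω ∂μ := by
  calc ∫ ω in t, μ[f|m] ω * φ ω ∂μ = ∫ ω in t, μ[f * φ|m] ω ∂μ :=
        setIntegral_congr_ae (hm t ht)
          ((condExp_mul_of_aestronglyMeasurable_right hφ hfφ hf).mono fun ω hω _ => hω.symm)
    _ = ∫ ω in t, (f * φ) ω ∂μ := setIntegral_condExp hm hfφ ht

theorem setIntegral_eq_of_isPiSystem_preimage {β : Type*} [mβ : MeasurableSpace β] {V : Ω → β}
    (hV : Measurable V) {C : Set (Set β)} (hgen : mβ = MeasurableSpace.generateFrom C)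
    (hC : IsPiSystem C) {F G : Ω → ℝ} (hF : Integrable F μ) (hG : Integrable G μ)
    (hFG : ∀ S ∈ C, ∫ ω in V ⁻¹' S, F ω ∂μ = ∫ ω in V ⁻¹' S, G ω ∂μ)
    (huniv : ∫ ω, F ω ∂μ = ∫ ω, G ω ∂μ) {s : Set Ω} (hs : MeasurableSet[mβ.comap V] s) :
    ∫ ω in s, F ω ∂μ = ∫ ω in s, G ω ∂μ := by
  obtain ⟨S, hS, rfl⟩ := hs
  have hpush {S : Set β} (hS : MeasurableSet S) {H : Ω → ℝ} (hH : Integrable H μ) :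
      (μ.withDensityᵥ H).map V S = ∫ ω in V ⁻¹' S, H ω ∂μ := by
    rw [VectorMeasure.map_apply _ hV hS, withDensityᵥ_apply hH (hV hS)]
  have hmap : (μ.withDensityᵥ F).map V = (μ.withDensityᵥ G).map V := by
    refine VectorMeasure.ext_of_generateFrom C (fun S hSC => ?_) hgen hC ?_
    · have hS : MeasurableSet S := hgen ▸ MeasurableSpace.measurableSet_generateFrom hSC
      rw [hpush hS hF, hpush hS hG, hFG S hSC]
    · rw [hpush .univ hF, hpush .univ hG]
      simpa using huniv
  rw [← hpush hS hF, ← hpush hS hG, hmap]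

theorem setIntegral_condExp_comp_of_condIndepGiven {β : Type*} [MeasurableSpace β]
    [IsFiniteMeasure μ] (hm : m ≤ m0) {Y : Ω → α} {Z : Ω → β} (hY : Measurable Y)
    (hZ : Measurable Z) (hCI : CondIndepGiven μ m Y Z) {g : α → ℝ} (hg : Measurable g)
    (hgY : Integrable (fun ω => g (Y ω)) μ) {B : Set β} (hB : MeasurableSet B) {t : Set Ω}
    (ht : MeasurableSet[m] t) :
    ∫ ω in Z ⁻¹' B ∩ t, μ[fun ω => g (Y ω)|m] ω ∂μ = ∫ ω in Z ⁻¹' B ∩ t, g (Y ω) ∂μ := by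
  set k : Ω → ℝ := (Z ⁻¹' B).indicator 1
  set G : Ω → ℝ := fun ω => g (Y ω)
  have hk : Integrable k μ := (integrable_const 1).indicator (hZ hB)
  have hk_nonneg : 0 ≤ k := Set.indicator_nonneg fun _ _ => zero_le_one
  have hk_bdd : ∀ᵐ ω ∂μ, ‖k ω‖ ≤ 1 :=
    ae_of_all _ fun _ => (norm_indicator_le_norm_self _ _).trans (by simp)
  have hκ_bdd : ∀ᵐ ω ∂μ, ‖μ[k|m] ω‖ ≤ 1 := by
    simpa using ae_bdd_abs_condExp_of_ae_bdd_abs (R := 1) (m := m) (by simpa using hk_bdd)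
  have hκ : AEStronglyMeasurable[m] (μ[k|m]) μ :=
    stronglyMeasurable_condExp.aestronglyMeasurable
  have hĜ : AEStronglyMeasurable[m] (μ[G|m]) μ :=
    stronglyMeasurable_condExp.aestronglyMeasurable
  have hindicator (A : Set α) (hA : MeasurableSet A) :
      ∫ ω in t, A.indicator 1 (Y ω) * μ[k|m] ω ∂μ = ∫ ω in t, A.indicator 1 (Y ω) * k ω ∂μ := by
    have hAY : Integrable (fun ω => A.indicator (1 : α → ℝ) (Y ω)) μ :=
      (integrable_const 1).indicator (hY hA)
    calc ∫ ω in t, A.indicator 1 (Y ω) * μ[k|m] ω ∂μ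
        = ∫ ω in t, μ[fun ω => A.indicator 1 (Y ω)|m] ω * μ[k|m] ω ∂μ :=
          (setIntegral_condExp_mul hm ht hκ (hAY.mul_bdd integrable_condExp.1 hκ_bdd) hAY).symm
      _ = ∫ ω in t, μ[fun ω => A.indicator 1 (Y ω) * k ω|m] ω ∂μ :=
        setIntegral_congr_ae (hm t ht) ((hCI A B hA hB).mono fun ω hω _ => hω.symm)
      _ = ∫ ω in t, A.indicator 1 (Y ω) * k ω ∂μ :=
        setIntegral_condExp hm (hAY.mul_bdd hk.1 hk_bdd) ht
  have hweights : ∫ ω in t, G ω * μ[k|m] ω ∂μ = ∫ ω in t, G ω * k ω ∂μ :=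
    integral_comp_mul_eq_of_forall_indicator hY integrable_condExp.restrict hk.restrict
      (ae_restrict_of_ae (condExp_nonneg (ae_of_all _ hk_nonneg))) (ae_of_all _ hk_nonneg)
      hindicator hg
  have hrestrict (f : Ω → ℝ) : ∫ ω in Z ⁻¹' B ∩ t, f ω ∂μ = ∫ ω in t, f ω * k ω ∂μ := by
    rw [← Measure.restrict_restrict (hZ hB), ← integral_indicator (hZ hB)]
    congr 1 with ω
    by_cases hω : ω ∈ Z ⁻¹' B <;> simp [k, hω]
  rw [hrestrict, hrestrict]
  calc ∫ ω in t, μ[G|m] ω * k ω ∂μ = ∫ ω in t, k ω * μ[G|m] ω ∂μ := by simp_rw [mul_comm]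
    _ = ∫ ω in t, μ[k|m] ω * μ[G|m] ω ∂μ :=
      (setIntegral_condExp_mul hm ht hĜ (integrable_condExp.bdd_mul hk.1 hk_bdd) hk).symm
    _ = ∫ ω in t, μ[G|m] ω * μ[k|m] ω ∂μ := by simp_rw [mul_comm]
    _ = ∫ ω in t, G ω * μ[k|m] ω ∂μ :=
      setIntegral_condExp_mul hm ht hκ (hgY.mul_bdd integrable_condExp.1 hκ_bdd) hgY
    _ = ∫ ω in t, G ω * k ω ∂μ := hweights

theorem condExp_condExp_of_condIndepGiven {β γ : Type*} [MeasurableSpace β] [MeasurableSpace γ]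
    [IsFiniteMeasure μ] (hm : m ≤ m0) {Y : Ω → α} {Z : Ω → β} {X : Ω → γ} (hY : Measurable Y)
    (hZ : Measurable Z) (hX : Measurable[m] X) (hCI : CondIndepGiven μ m Y Z) {g : α → ℝ}
    (hg : Measurable g) (hgY : Integrable (fun ω => g (Y ω)) μ) :
    μ[μ[fun ω => g (Y ω)|m] | MeasurableSpace.comap (fun ω => (Z ω, X ω)) inferInstance]
      =ᵐ[μ] μ[fun ω => g (Y ω) | MeasurableSpace.comap (fun ω => (Z ω, X ω)) inferInstance] := by
  have hZX : Measurable fun ω => (Z ω, X ω) := hZ.prodMk (hX.mono hm le_rfl)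
  refine ae_eq_condExp_of_forall_setIntegral_eq hZX.comap_le hgY
    (fun _ _ _ => integrable_condExp.integrableOn) (fun s hs _ => ?_)
    stronglyMeasurable_condExp.aestronglyMeasurable
  rw [setIntegral_condExp hZX.comap_le integrable_condExp hs]
  refine setIntegral_eq_of_isPiSystem_preimage hZX generateFrom_prod.symm isPiSystem_prod
    integrable_condExp hgY ?_ (integral_condExp hm) hs
  rintro _ ⟨B, hB, D, hD, rfl⟩
  rw [Set.mk_preimage_prod]
  exact setIntegral_condExp_comp_of_condIndepGiven hm hY hZ hCI hg hgY hB (hX hD)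

end

/-- Suppose (i) `Y ⟂ Z | σ(W,X)` and (ii) completeness: every integrable
`σ(W,X)`-measurable `φ` with `E[φ | σ(Z,X)] = 0` a.s. satisfies `φ = 0` a.s.
Then for every bounded measurable `g`, any integrable `σ(W,X)`-measurable `h`
with `E[h | σ(Z,X)] = E[g(Y) | σ(Z,X)]` a.s. equals `E[g(Y) | σ(W,X)]` a.s. -/
theorem stmt_1 {Ω : Type*} [MeasurableSpace Ω] (μ : Measure Ω) [IsProbabilityMeasure μ]
    (Y Z W X : Ω → ℝ) (hY : Measurable Y) (hZ : Measurable Z)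
    (hW : Measurable W) (hX : Measurable X)
    (hCI : CondIndepGiven μ
      (MeasurableSpace.comap (fun ω => (W ω, X ω)) inferInstance) Y Z)
    (hComplete : ∀ φ : Ω → ℝ, Integrable φ μ →
      Measurable[MeasurableSpace.comap (fun ω => (W ω, X ω)) inferInstance] φ →
      (μ[φ | MeasurableSpace.comap (fun ω => (Z ω, X ω)) inferInstance] =ᵐ[μ] 0) →
      φ =ᵐ[μ] 0) :
    ∀ g : ℝ → ℝ, Measurable g → (∃ C, ∀ x, |g x| ≤ C) →
      ∀ h : Ω → ℝ, Integrable h μ →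
        Measurable[MeasurableSpace.comap (fun ω => (W ω, X ω)) inferInstance] h →
        (μ[h | MeasurableSpace.comap (fun ω => (Z ω, X ω)) inferInstance]
          =ᵐ[μ]
         μ[fun ω => g (Y ω) | MeasurableSpace.comap (fun ω => (Z ω, X ω)) inferInstance]) →
        h =ᵐ[μ]
          μ[fun ω => g (Y ω) | MeasurableSpace.comap (fun ω => (W ω, X ω)) inferInstance] := by
  intro g hg ⟨C, hC⟩ h hh hhm hhZX
  set mWX : MeasurableSpace Ω := MeasurableSpace.comap (fun ω => (W ω, X ω)) inferInstance
  have hXm : Measurable[mWX] X := measurable_snd.comp (comap_measurable _)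
  have hgY : Integrable (fun ω => g (Y ω)) μ :=
    (integrable_const C).mono' (hg.comp hY).aestronglyMeasurable (ae_of_all _ fun _ => hC _)
  have htower :=
    condExp_condExp_of_condIndepGiven (hW.prodMk hX).comap_le hY hZ hXm hCI hg hgY
  have hzero := hComplete (h - μ[fun ω => g (Y ω)|mWX]) (hh.sub integrable_condExp)
    (hhm.sub stronglyMeasurable_condExp.measurable) <| by
      filter_upwards [condExp_sub hh integrable_condExp _, hhZX, htower] with ω h₁ h₂ h₃
      rw [h₁, Pi.sub_apply, h₂, h₃, sub_self, Pi.zero_apply]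
  filter_upwards [hzero] with ω hω using sub_eq_zero.mp hω
end

section
/- Let R, Y, W, V be random variables on a probability space (Ω, ℱ, P) with R taking values in {0,1}, let π(V) be a σ(V)-measurable version of E[R | σ(V)], and suppose there is δ ∈ (0,1) with δ ≤ π(V) ≤ 1 − δ almost surely. Suppose (Y,W) is conditionally independent of R given σ(V). Let u and s be measurable functions such that u(Y,V) and s(W,V) are integrable and E[u(Y,V)] = E[s(W,V)]. Then E[ R · u(Y,V) / π(V) − (1 − R) · s(W,V) / (1 − π(V)) ] = 0. -/
/-!
Conditional independence of `Z` and `X` given `σ(V)` says that on every set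
`X ⁻¹' A ∩ V ⁻¹' B` the densities `1_{Z ∈ C}` and `P(Z ∈ C | V)` have the same integral
(pull the `σ(V)`-measurable factor out of the conditional expectation). These sets form a
π-system generating `σ(X, V)`, so the two finite measures with these densities agree on
`σ(X, V)`, and `E[1_{Z ∈ C} F] = E[P(Z ∈ C | V) F]` for every `σ(X, V)`-measurable `F`.
With `Z = R`, `X = (Y, W)` and `F = u(Y, V) / π(V)`, resp. `F = s(W, V) / (1 - π(V))`, the two
inverse-probability-weighted terms have expectations `E[u(Y, V)]` and `E[s(W, V)]`, which are
equal by the moment condition.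
-/

open MeasureTheory
open scoped ENNReal

theorem CondIndepGiven.comp_right {Ω α β γ : Type*} {m : MeasurableSpace Ω} [MeasurableSpace Ω]
    [MeasurableSpace α] [MeasurableSpace β] [MeasurableSpace γ] {μ : Measure Ω} {f : Ω → α}
    {g : Ω → β} (h : CondIndepGiven μ m f g) {φ : β → γ} (hφ : Measurable φ) :
    CondIndepGiven μ m f (φ ∘ g) :=
  fun A B hA hB => h A (φ ⁻¹' B) hA (hφ hB)

theorem MeasurableSpace.comap_prodMk_eq_generateFrom_preimage_prod {Ω α β : Type*}
    [MeasurableSpace α] [MeasurableSpace β] (X : Ω → α) (V : Ω → β) :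
    MeasurableSpace.comap (fun ω => (X ω, V ω)) inferInstance
      = MeasurableSpace.generateFrom (Set.preimage (fun ω => (X ω, V ω)) ''
          Set.image2 (· ×ˢ ·) {A : Set α | MeasurableSet A} {B : Set β | MeasurableSet B}) := by
  rw [← MeasurableSpace.comap_generateFrom, generateFrom_prod]

namespace MeasureTheory

section Density

variable {Ω : Type*} {m mΩ : MeasurableSpace Ω} {μ : Measure Ω}

theorem integral_mul_eq_integral_withDensity {ρ : Ω → ℝ} (hρ : Measurable ρ) (hρ0 : 0 ≤ᵐ[μ] ρ)
    (F : Ω → ℝ) :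
    ∫ ω, ρ ω * F ω ∂μ = ∫ ω, F ω ∂μ.withDensity (fun ω => ENNReal.ofReal (ρ ω)) := by
  change _ = ∫ ω, F ω ∂μ.withDensity (fun ω => ((ρ ω).toNNReal : ℝ≥0∞))
  rw [integral_withDensity_eq_integral_smul hρ.real_toNNReal]
  refine integral_congr_ae ?_
  filter_upwards [hρ0] with ω hω
  simp [NNReal.smul_def, Real.coe_toNNReal _ hω]

theorem withDensity_ofReal_apply_eq_ofReal_setIntegral {ρ : Ω → ℝ} (hρi : Integrable ρ μ)
    (hρ0 : 0 ≤ᵐ[μ] ρ) {s : Set Ω} (hs : MeasurableSet s) :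
    μ.withDensity (fun ω => ENNReal.ofReal (ρ ω)) s = ENNReal.ofReal (∫ ω in s, ρ ω ∂μ) := by
  rw [withDensity_apply _ hs,
    ofReal_integral_eq_lintegral_ofReal hρi.restrict (ae_restrict_of_ae hρ0)]

/-- No integrability of `F` is needed: both sides are integrals of `F` against one and the same
measure on `m`. -/
theorem integral_mul_eq_of_forall_setIntegral_eq (hm : m ≤ mΩ) {C : Set (Set Ω)}
    (hgen : m = MeasurableSpace.generateFrom C) (hC : IsPiSystem C) {ρ q : Ω → ℝ}
    (hρ : Measurable ρ) (hq : Measurable q) (hρ0 : 0 ≤ᵐ[μ] ρ) (hq0 : 0 ≤ᵐ[μ] q)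
    (hρi : Integrable ρ μ) (hqi : Integrable q μ)
    (hC_eq : ∀ s ∈ C, ∫ ω in s, ρ ω ∂μ = ∫ ω in s, q ω ∂μ)
    (huniv : ∫ ω, ρ ω ∂μ = ∫ ω, q ω ∂μ) {F : Ω → ℝ} (hF : StronglyMeasurable[m] F) :
    ∫ ω, ρ ω * F ω ∂μ = ∫ ω, q ω * F ω ∂μ := by
  have := isFiniteMeasure_withDensity_ofReal hρi.2
  have htrim : (μ.withDensity fun ω => ENNReal.ofReal (ρ ω)).trim hm
      = (μ.withDensity fun ω => ENNReal.ofReal (q ω)).trim hm := by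
    refine ext_of_generate_finite C hgen hC (fun s hs => ?_) ?_
    · have hsm : MeasurableSet[m] s := hgen ▸ MeasurableSpace.measurableSet_generateFrom hs
      rw [trim_measurableSet_eq hm hsm, trim_measurableSet_eq hm hsm,
        withDensity_ofReal_apply_eq_ofReal_setIntegral hρi hρ0 (hm s hsm),
        withDensity_ofReal_apply_eq_ofReal_setIntegral hqi hq0 (hm s hsm), hC_eq s hs]
    · rw [trim_measurableSet_eq hm .univ, trim_measurableSet_eq hm .univ,
        withDensity_ofReal_apply_eq_ofReal_setIntegral hρi hρ0 .univ,
        withDensity_ofReal_apply_eq_ofReal_setIntegral hqi hq0 .univ, setIntegral_univ,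
        setIntegral_univ, huniv]
  rw [integral_mul_eq_integral_withDensity hρ hρ0, integral_mul_eq_integral_withDensity hq hq0,
    integral_trim hm hF, integral_trim hm hF, htrim]

end Density

section CondIndep

variable {Ω α β γ : Type*} {m mΩ : MeasurableSpace Ω} [MeasurableSpace α] [MeasurableSpace β]
  [MeasurableSpace γ] {μ : Measure Ω} [IsFiniteMeasure μ]

theorem integrable_indicator_one_comp {X : Ω → α} (hX : Measurable X) {A : Set α}
    (hA : MeasurableSet A) : Integrable (fun ω => A.indicator (fun _ => (1 : ℝ)) (X ω)) μ :=
  (integrable_const (1 : ℝ)).indicator (hX hA)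

theorem Integrable.indicator_one_comp_mul {X : Ω → α} (hX : Measurable X) {A : Set α}
    (hA : MeasurableSet A) {f : Ω → ℝ} (hf : Integrable f μ) :
    Integrable (fun ω => A.indicator (fun _ => (1 : ℝ)) (X ω) * f ω) μ :=
  hf.bdd_mul (c := 1) (integrable_indicator_one_comp hX hA).1
    (ae_of_all _ fun _ => (norm_indicator_le_norm_self _ _).trans_eq norm_one)

theorem setIntegral_preimage_inter_eq_setIntegral_condExp (hm : m ≤ mΩ) {X : Ω → α}
    {Z : Ω → β} (hX : Measurable X) (hZ : Measurable Z) (hCI : CondIndepGiven μ m X Z)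
    {A : Set α} (hA : MeasurableSet A) {B : Set β} (hB : MeasurableSet B) {t : Set Ω}
    (ht : MeasurableSet[m] t) :
    ∫ ω in X ⁻¹' A ∩ t, B.indicator (fun _ => (1 : ℝ)) (Z ω) ∂μ
      = ∫ ω in X ⁻¹' A ∩ t, μ[fun ω' => B.indicator (fun _ => (1 : ℝ)) (Z ω') | m] ω ∂μ := by
  set g := fun ω => A.indicator (fun _ => (1 : ℝ)) (X ω)
  set ρ := fun ω => B.indicator (fun _ => (1 : ℝ)) (Z ω)
  have hρ : Integrable ρ μ := integrable_indicator_one_comp hZ hB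
  have hgp : Integrable (g * μ[ρ | m]) μ := integrable_condExp.indicator_one_comp_mul hX hA
  have hset : ∀ f : Ω → ℝ, ∫ ω in X ⁻¹' A ∩ t, f ω ∂μ = ∫ ω in t, g ω * f ω ∂μ := fun f => by
    rw [Set.inter_comm, ← setIntegral_indicator (hX hA)]
    congr with ω
    by_cases h : X ω ∈ A <;> simp [g, h]
  calc ∫ ω in X ⁻¹' A ∩ t, ρ ω ∂μ
      = ∫ ω in t, μ[g * ρ | m] ω ∂μ := by
        rw [hset]
        exact (setIntegral_condExp hm (hρ.indicator_one_comp_mul hX hA) ht).symm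
    _ = ∫ ω in t, μ[g * μ[ρ | m] | m] ω ∂μ := by
        refine setIntegral_congr_ae (hm t ht) ?_
        filter_upwards [hCI A B hA hB, condExp_mul_of_stronglyMeasurable_right
          stronglyMeasurable_condExp hgp (integrable_indicator_one_comp hX hA)] with ω h₁ h₂ _
        exact h₁.trans h₂.symm
    _ = ∫ ω in X ⁻¹' A ∩ t, μ[ρ | m] ω ∂μ := by
        rw [setIntegral_condExp hm hgp ht, hset]
        rfl

theorem integral_indicator_comp_mul_eq_integral_condExp_mul {X : Ω → α} {V : Ω → β}
    {Z : Ω → γ} (hX : Measurable X) (hV : Measurable V) (hZ : Measurable Z)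
    (hCI : CondIndepGiven μ (MeasurableSpace.comap V inferInstance) X Z)
    {C : Set γ} (hC : MeasurableSet C) {F : Ω → ℝ}
    (hF : Measurable[MeasurableSpace.comap (fun ω => (X ω, V ω)) inferInstance] F) :
    ∫ ω, C.indicator (fun _ => (1 : ℝ)) (Z ω) * F ω ∂μ
      = ∫ ω, μ[fun ω' => C.indicator (fun _ => (1 : ℝ)) (Z ω') |
          MeasurableSpace.comap V inferInstance] ω * F ω ∂μ := by
  have hm := hV.comap_le
  have hρ0 : ∀ᵐ ω ∂μ, 0 ≤ C.indicator (fun _ => (1 : ℝ)) (Z ω) :=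
    ae_of_all _ fun _ => Set.indicator_nonneg (fun _ _ => zero_le_one) _
  refine integral_mul_eq_of_forall_setIntegral_eq (hX.prodMk hV).comap_le
    (MeasurableSpace.comap_prodMk_eq_generateFrom_preimage_prod X V)
    (isPiSystem_prod.comap _) ((measurable_const.indicator hC).comp hZ)
    (stronglyMeasurable_condExp.mono hm).measurable hρ0 (condExp_nonneg hρ0)
    (integrable_indicator_one_comp hZ hC) integrable_condExp ?_ (integral_condExp hm).symm
    hF.stronglyMeasurable
  rintro _ ⟨_, ⟨A, hA, B, hB, rfl⟩, rfl⟩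
  rw [Set.mk_preimage_prod]
  exact setIntegral_preimage_inter_eq_setIntegral_condExp hm hX hZ hCI hA hC ⟨B, hB, rfl⟩

theorem condExp_const_sub (hm : m ≤ mΩ) (c : ℝ) {f : Ω → ℝ} (hf : Integrable f μ) :
    μ[fun ω => c - f ω | m] =ᵐ[μ] fun ω => c - μ[f | m] ω := by
  have h := condExp_sub (integrable_const c) hf m
  rwa [condExp_const hm] at h

variable {X : Ω → α} {V : Ω → β} {R : Ω → ℝ}

theorem integral_mul_eq_integral_condExp_mul_of_condIndepGiven (hX : Measurable X)
    (hV : Measurable V) (hR : Measurable R) (hR01 : ∀ ω, R ω = 0 ∨ R ω = 1)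
    (hCI : CondIndepGiven μ (MeasurableSpace.comap V inferInstance) X R) {F : Ω → ℝ}
    (hF : Measurable[MeasurableSpace.comap (fun ω => (X ω, V ω)) inferInstance] F) :
    ∫ ω, R ω * F ω ∂μ = ∫ ω, μ[R | MeasurableSpace.comap V inferInstance] ω * F ω ∂μ := by
  have hR1 : ∀ ω, ({1} : Set ℝ).indicator (fun _ => (1 : ℝ)) (R ω) = R ω := fun ω => by
    rcases hR01 ω with h | h <;> simp [h]
  simpa only [hR1] using integral_indicator_comp_mul_eq_integral_condExp_mul hX hV hR hCI
    (measurableSet_singleton 1) hF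

theorem integral_mul_comp_div_eq_of_condIndepGiven (hX : Measurable X) (hV : Measurable V)
    (hR : Measurable R) (hR01 : ∀ ω, R ω = 0 ∨ R ω = 1)
    (hCI : CondIndepGiven μ (MeasurableSpace.comap V inferInstance) X R) {p : Ω → ℝ}
    (hpm : Measurable[MeasurableSpace.comap V inferInstance] p)
    (hp : p =ᵐ[μ] μ[R | MeasurableSpace.comap V inferInstance]) (hp0 : ∀ᵐ ω ∂μ, p ω ≠ 0)
    {g : α × β → ℝ} (hg : Measurable g) :
    ∫ ω, R ω * g (X ω, V ω) / p ω ∂μ = ∫ ω, g (X ω, V ω) ∂μ := by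
  have hT := comap_measurable (m := inferInstance) fun ω => (X ω, V ω)
  simp_rw [mul_div_assoc]
  rw [integral_mul_eq_integral_condExp_mul_of_condIndepGiven (F := fun ω => g (X ω, V ω) / p ω)
    hX hV hR hR01 hCI ((hg.comp hT).div (hpm.mono hT.snd.comap_le le_rfl))]
  refine integral_congr_ae ?_
  filter_upwards [hp, hp0] with ω h h0
  rw [← h, mul_div_cancel₀ _ h0]

end CondIndep

theorem Integrable.mul_div_of_abs_le_one_of_le {Ω : Type*} [MeasurableSpace Ω] {μ : Measure Ω}
    {f a b : Ω → ℝ} (hf : Integrable f μ) (ha : AEMeasurable a μ) (hb : AEMeasurable b μ)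
    (ha1 : ∀ᵐ ω ∂μ, |a ω| ≤ 1) {δ : ℝ} (hδ : 0 < δ) (hbδ : ∀ᵐ ω ∂μ, δ ≤ b ω) :
    Integrable (fun ω => a ω * f ω / b ω) μ := by
  refine (hf.bdd_mul (c := δ⁻¹) (ha.div hb).aestronglyMeasurable ?_).congr
    (ae_of_all _ fun ω => ?_)
  · filter_upwards [ha1, hbδ] with ω h₁ h₂
    have hb0 : 0 < b ω := hδ.trans_le h₂
    rw [Pi.div_apply, Real.norm_eq_abs, abs_div, abs_of_pos hb0, div_eq_mul_inv]
    calc |a ω| * (b ω)⁻¹ ≤ 1 * δ⁻¹ := by gcongr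
      _ = δ⁻¹ := one_mul _
  · simp only [Pi.div_apply]
    ring

end MeasureTheory

/-- Core population identity for consistency (Theorem 1):
if `(Y,W) ⟂ R | σ(V)`, `π(V)` is a bounded version of `E[R | σ(V)]`, and
`E[u(Y,V)] = E[s(W,V)]`, then
`E[R·u(Y,V)/π(V) - (1-R)·s(W,V)/(1-π(V))] = 0`. -/
theorem stmt_6 {Ω : Type*} [MeasurableSpace Ω] (μ : Measure Ω) [IsProbabilityMeasure μ]
    (R Y W V : Ω → ℝ) (hR : Measurable R) (hY : Measurable Y)
    (hW : Measurable W) (hV : Measurable V)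
    (hR01 : ∀ ω, R ω = 0 ∨ R ω = 1)
    (πV : Ω → ℝ)
    (hπmeas : Measurable[MeasurableSpace.comap V inferInstance] πV)
    (hπver : πV =ᵐ[μ] μ[R | MeasurableSpace.comap V inferInstance])
    (δ : ℝ) (hδ : δ ∈ Set.Ioo (0 : ℝ) 1)
    (hπbound : ∀ᵐ ω ∂μ, δ ≤ πV ω ∧ πV ω ≤ 1 - δ)
    (hCI : CondIndepGiven μ (MeasurableSpace.comap V inferInstance)
      (fun ω => (Y ω, W ω)) R)
    (u s : ℝ × ℝ → ℝ) (hu : Measurable u) (hs : Measurable s)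
    (huint : Integrable (fun ω => u (Y ω, V ω)) μ)
    (hsint : Integrable (fun ω => s (W ω, V ω)) μ)
    (hmoment : ∫ ω, u (Y ω, V ω) ∂μ = ∫ ω, s (W ω, V ω) ∂μ) :
    ∫ ω, (R ω * u (Y ω, V ω) / πV ω - (1 - R ω) * s (W ω, V ω) / (1 - πV ω)) ∂μ = 0 := by
  have hπ₀ : ∀ᵐ ω ∂μ, δ ≤ πV ω := hπbound.mono fun _ h => h.1
  have hπ₁ : ∀ᵐ ω ∂μ, δ ≤ 1 - πV ω := hπbound.mono fun _ h => by linarith [h.2]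
  have hR₁ : ∀ ω, 1 - R ω = 0 ∨ 1 - R ω = 1 := fun ω => by rcases hR01 ω with h | h <;> simp [h]
  have habs : ∀ {r : ℝ}, r = 0 ∨ r = 1 → |r| ≤ 1 := by rintro r (rfl | rfl) <;> simp
  have hRi : Integrable R μ :=
    .of_bound hR.aestronglyMeasurable 1 (ae_of_all _ fun ω => habs (hR01 ω))
  have e₁ : ∫ ω, R ω * u (Y ω, V ω) / πV ω ∂μ = ∫ ω, u (Y ω, V ω) ∂μ :=
    integral_mul_comp_div_eq_of_condIndepGiven (hY.prodMk hW) hV hR hR01 hCI hπmeas hπver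
      (hπ₀.mono fun _ h => (hδ.1.trans_le h).ne') (hu.comp (measurable_fst.fst.prodMk measurable_snd))
  have e₂ : ∫ ω, (1 - R ω) * s (W ω, V ω) / (1 - πV ω) ∂μ = ∫ ω, s (W ω, V ω) ∂μ :=
    integral_mul_comp_div_eq_of_condIndepGiven (hY.prodMk hW) hV (measurable_const.sub hR) hR₁
      (hCI.comp_right (measurable_const.sub measurable_id)) (measurable_const.sub hπmeas)
      ((hπver.fun_comp (1 - ·)).trans (condExp_const_sub hV.comap_le 1 hRi).symm)
      (hπ₁.mono fun _ h => (hδ.1.trans_le h).ne') (hs.comp (measurable_fst.snd.prodMk measurable_snd))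
  have hπ : Measurable πV := hπmeas.mono hV.comap_le le_rfl
  have hint₁ : Integrable (fun ω => R ω * u (Y ω, V ω) / πV ω) μ :=
    huint.mul_div_of_abs_le_one_of_le hR.aemeasurable hπ.aemeasurable
      (ae_of_all _ fun ω => habs (hR01 ω)) hδ.1 hπ₀
  have hint₂ : Integrable (fun ω => (1 - R ω) * s (W ω, V ω) / (1 - πV ω)) μ :=
    hsint.mul_div_of_abs_le_one_of_le (measurable_const.sub hR).aemeasurable
      (measurable_const.sub hπ).aemeasurable (ae_of_all _ fun ω => habs (hR₁ ω)) hδ.1 hπ₁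
  rw [integral_sub hint₁ hint₂, e₁, e₂, hmoment, sub_self]
end

section
/- Let R, Y, W, V be random variables on a probability space (Ω, ℱ, P) with R taking values in {0,1}, Y integrable, and suppose (Y,W) is conditionally independent of R given σ(V). Let m(W,V) be a σ(W,V)-measurable version of E[Y | σ(W,V)] and let ȳ(V) be a σ(V)-measurable version of E[Y | σ(V)], and assume m(W,V) is integrable. Then for every bounded measurable function t of V, E[ t(V) · ( R·(Y − ȳ(V)) + (1 − R)·(ȳ(V) − m(W,V)) ) ] = 0. -/
open MeasureTheory

open Set

namespace MeasurableSpace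

variable {Ω : Type*}

lemma isPiSystem_image2_inter (m₁ m₂ : MeasurableSpace Ω) :
    IsPiSystem (image2 (· ∩ ·) {s | MeasurableSet[m₁] s} {t | MeasurableSet[m₂] t}) := by
  rintro _ ⟨a, ha, b, hb, rfl⟩ _ ⟨a', ha', b', hb', rfl⟩ _
  exact ⟨a ∩ a', ha.inter ha', b ∩ b', hb.inter hb', inter_inter_inter_comm a a' b b'⟩

lemma generateFrom_image2_inter (m₁ m₂ : MeasurableSpace Ω) :
    generateFrom (image2 (· ∩ ·) {s | MeasurableSet[m₁] s} {t | MeasurableSet[m₂] t}) =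
      m₁ ⊔ m₂ := by
  refine le_antisymm (generateFrom_le ?_) (sup_le (fun s hs => ?_) (fun t ht => ?_))
  · rintro _ ⟨a, ha, b, hb, rfl⟩
    exact (le_sup_left (a := m₁) (b := m₂) a ha).inter (le_sup_right (a := m₁) b hb)
  · exact measurableSet_generateFrom ⟨s, hs, univ, MeasurableSet.univ, inter_univ s⟩
  · exact measurableSet_generateFrom ⟨univ, MeasurableSet.univ, t, ht, univ_inter t⟩

end MeasurableSpace

section

variable {Ω E : Type*} {mΩ : MeasurableSpace Ω} {μ : Measure Ω}
  [NormedAddCommGroup E] [NormedSpace ℝ E]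

theorem setIntegral_eq_of_isPiSystem {m : MeasurableSpace Ω} (hm : m ≤ mΩ)
    {S : Set (Set Ω)} (h_eq : m = MeasurableSpace.generateFrom S) (h_inter : IsPiSystem S)
    {f g : Ω → E} (hf : Integrable f μ) (hg : Integrable g μ)
    (basic : ∀ t ∈ S, ∫ x in t, f x ∂μ = ∫ x in t, g x ∂μ)
    (h_univ : ∫ x, f x ∂μ = ∫ x, g x ∂μ) {t : Set Ω} (ht : MeasurableSet[m] t) :
    ∫ x in t, f x ∂μ = ∫ x in t, g x ∂μ := by
  induction t, ht using MeasurableSpace.induction_on_inter h_eq h_inter with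
  | empty => simp
  | basic t ht => exact basic t ht
  | compl t ht ih =>
    rw [setIntegral_compl (hm t ht) hf, setIntegral_compl (hm t ht) hg, ih, h_univ]
  | iUnion t htd htm ih =>
    rw [integral_iUnion (fun i => hm _ (htm i)) htd hf.integrableOn,
      integral_iUnion (fun i => hm _ (htm i)) htd hg.integrableOn]
    exact tsum_congr ih

end

section

variable {Ω : Type*} {m mΩ : MeasurableSpace Ω} {μ : Measure Ω}

lemma integral_mul_condExp (hm : m ≤ mΩ) [SigmaFinite (μ.trim hm)] {g f : Ω → ℝ}
    (hg : AEStronglyMeasurable[m] g μ) (hgf : Integrable (g * f) μ) (hf : Integrable f μ) :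
    ∫ ω, g ω * f ω ∂μ = ∫ ω, g ω * μ[f|m] ω ∂μ :=
  calc ∫ ω, g ω * f ω ∂μ = ∫ ω, μ[g * f|m] ω ∂μ := (integral_condExp hm).symm
    _ = ∫ ω, g ω * μ[f|m] ω ∂μ :=
      integral_congr_ae (condExp_mul_of_aestronglyMeasurable_left hg hgf hf)

lemma integral_mul_eq_zero_of_condExp_eq_zero (hm : m ≤ mΩ) [IsFiniteMeasure μ] {g f : Ω → ℝ}
    {C : ℝ} (hg : StronglyMeasurable[m] g) (hg_bdd : ∀ᵐ ω ∂μ, ‖g ω‖ ≤ C)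
    (hf : Integrable f μ) (hf0 : μ[f|m] =ᵐ[μ] 0) :
    ∫ ω, g ω * f ω ∂μ = 0 := by
  rw [integral_mul_condExp hm hg.aestronglyMeasurable
    (hf.bdd_mul (hg.mono hm).aestronglyMeasurable hg_bdd) hf]
  refine (integral_congr_ae ?_).trans (integral_zero Ω ℝ)
  filter_upwards [hf0] with ω hω
  simp [hω]

lemma condExp_sub_eq_zero_of_ae_eq_condExp (hm : m ≤ mΩ) [SigmaFinite (μ.trim hm)]
    {f g : Ω → ℝ} (hf : Integrable f μ) (hg : g =ᵐ[μ] μ[f|m]) :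
    μ[f - g|m] =ᵐ[μ] 0 := by
  have hg_int : Integrable g μ := integrable_condExp.congr hg.symm
  have hcond_g : μ[g|m] =ᵐ[μ] μ[f|m] := by
    refine (condExp_congr_ae hg).trans ?_
    rw [condExp_of_stronglyMeasurable hm stronglyMeasurable_condExp integrable_condExp]
  filter_upwards [condExp_sub hf hg_int m, hcond_g] with ω h_sub h_g
  simp [h_sub, h_g]

lemma integral_mul_eq_zero_of_condExp_eq_condExp (hm : m ≤ mΩ) [IsFiniteMeasure μ]
    {ℋ : MeasurableSpace Ω} (hℋ : ℋ ≤ mΩ) {g R : Ω → ℝ} {c : ℝ}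
    (hg : AEStronglyMeasurable[ℋ] g μ) (hg_int : Integrable g μ) (hg0 : μ[g|m] =ᵐ[μ] 0)
    (hRint : Integrable R μ) (hR_bdd : ∀ᵐ ω ∂μ, |R ω| ≤ c) (hR_cond : μ[R|ℋ] =ᵐ[μ] μ[R|m]) :
    ∫ ω, g ω * R ω ∂μ = 0 :=
  calc ∫ ω, g ω * R ω ∂μ = ∫ ω, g ω * μ[R|ℋ] ω ∂μ :=
        integral_mul_condExp hℋ hg (hg_int.mul_bdd hRint.aestronglyMeasurable
          (hR_bdd.mono fun ω h => by rwa [Real.norm_eq_abs])) hRint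
    _ = ∫ ω, μ[R|m] ω * g ω ∂μ := integral_congr_ae <| by
        filter_upwards [hR_cond] with ω h
        rw [h, mul_comm]
    _ = 0 := integral_mul_eq_zero_of_condExp_eq_zero hm stronglyMeasurable_condExp
        (ae_bdd_abs_condExp_of_ae_bdd_abs hR_bdd) hg_int hg0

end

section

variable {Ω α : Type*} {m mΩ : MeasurableSpace Ω} [MeasurableSpace α] {μ : Measure Ω}
  [IsFiniteMeasure μ] {X : Ω → α} {R : Ω → ℝ}

lemma integrable_of_eq_zero_or_eq_one (hR : Measurable R) (hR01 : ∀ ω, R ω = 0 ∨ R ω = 1) :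
    Integrable R μ :=
  (integrable_const (1 : ℝ)).mono' hR.aestronglyMeasurable
    (ae_of_all _ fun ω => by rcases hR01 ω with h | h <;> simp [h])

lemma setIntegral_inter_preimage_eq_of_condIndepGiven (hm : m ≤ mΩ) (hX : Measurable X)
    (hR : Measurable R) (hR01 : ∀ ω, R ω = 0 ∨ R ω = 1) (hCI : CondIndepGiven μ m X R)
    {a : Set Ω} (ha : MeasurableSet[m] a) {B : Set α} (hB : MeasurableSet B) :
    ∫ ω in a ∩ X ⁻¹' B, R ω ∂μ = ∫ ω in a ∩ X ⁻¹' B, μ[R|m] ω ∂μ := by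
  set I : Ω → ℝ := fun ω => B.indicator (fun _ => 1) (X ω)
  have hI_meas : AEStronglyMeasurable I μ :=
    ((measurable_const.indicator hB).comp hX).aestronglyMeasurable
  have hI_bdd : ∀ᵐ ω ∂μ, ‖I ω‖ ≤ 1 := ae_of_all _ fun ω => by
    by_cases h : X ω ∈ B <;> simp [I, h]
  have hI : Integrable I μ := (integrable_const (1 : ℝ)).mono' hI_meas hI_bdd
  have hRint : Integrable R μ := integrable_of_eq_zero_or_eq_one hR hR01
  have h_restrict : ∀ f : Ω → ℝ, ∫ ω in a ∩ X ⁻¹' B, f ω ∂μ = ∫ ω in a, (I * f) ω ∂μ := by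
    intro f
    rw [← setIntegral_indicator (measurableSet_preimage hX hB)]
    refine setIntegral_congr_fun (hm a ha) fun ω _ => ?_
    by_cases h : X ω ∈ B <;> simp [I, h]
  have h_indicator_R : ∀ ω, ({1} : Set ℝ).indicator (fun _ => (1 : ℝ)) (R ω) = R ω := fun ω => by
    rcases hR01 ω with h | h <;> simp [h]
  have h_factor : μ[I * R|m] =ᵐ[μ] μ[I|m] * μ[R|m] := by
    have h := hCI B {1} hB (measurableSet_singleton 1)
    simp only [h_indicator_R] at h
    exact h
  have hIe_int : Integrable (I * μ[R|m]) μ := integrable_condExp.bdd_mul hI_meas hI_bdd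
  rw [h_restrict, h_restrict]
  calc ∫ ω in a, (I * R) ω ∂μ = ∫ ω in a, μ[I * R|m] ω ∂μ :=
        (setIntegral_condExp hm (hRint.bdd_mul hI_meas hI_bdd) ha).symm
    _ = ∫ ω in a, (μ[I|m] * μ[R|m]) ω ∂μ :=
        setIntegral_congr_ae (hm a ha) (h_factor.mono fun ω h _ => h)
    _ = ∫ ω in a, μ[I * μ[R|m]|m] ω ∂μ :=
        setIntegral_congr_ae (hm a ha) <| (condExp_mul_of_stronglyMeasurable_right
          stronglyMeasurable_condExp hIe_int hI).mono fun ω h _ => h.symm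
    _ = ∫ ω in a, (I * μ[R|m]) ω ∂μ := setIntegral_condExp hm hIe_int ha

theorem condExp_sup_comap_eq_of_condIndepGiven (hm : m ≤ mΩ) (hX : Measurable X)
    (hR : Measurable R) (hR01 : ∀ ω, R ω = 0 ∨ R ω = 1) (hCI : CondIndepGiven μ m X R) :
    μ[R|m ⊔ MeasurableSpace.comap X inferInstance] =ᵐ[μ] μ[R|m] := by
  have hle : m ⊔ MeasurableSpace.comap X inferInstance ≤ mΩ := sup_le hm hX.comap_le
  have hRint : Integrable R μ := integrable_of_eq_zero_or_eq_one hR hR01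
  have h_meas : StronglyMeasurable[m ⊔ MeasurableSpace.comap X inferInstance] μ[R|m] :=
    stronglyMeasurable_condExp.mono le_sup_left
  refine (ae_eq_condExp_of_forall_setIntegral_eq hle hRint
    (fun _ _ _ => integrable_condExp.integrableOn) (fun s hs _ => ?_)
    h_meas.aestronglyMeasurable).symm
  refine setIntegral_eq_of_isPiSystem hle (MeasurableSpace.generateFrom_image2_inter _ _).symm
    (MeasurableSpace.isPiSystem_image2_inter _ _) integrable_condExp hRint ?_
    (integral_condExp hm) hs
  rintro _ ⟨a, ha, _, ⟨B, hB, rfl⟩, rfl⟩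
  exact (setIntegral_inter_preimage_eq_of_condIndepGiven hm hX hR hR01 hCI ha hB).symm

end

theorem integral_mul_estimatingEquation_eq_zero {Ω : Type*} {𝒱 𝒲 ℋ mΩ : MeasurableSpace Ω}
    {μ : Measure Ω} [IsFiniteMeasure μ] (h𝒱𝒲 : 𝒱 ≤ 𝒲) (h𝒲ℋ : 𝒲 ≤ ℋ) (hℋ : ℋ ≤ mΩ)
    {R Y mWV yV s : Ω → ℝ} {c C : ℝ} (hRint : Integrable R μ)
    (hR_bdd : ∀ᵐ ω ∂μ, |R ω| ≤ c) (hR_cond : μ[R|ℋ] =ᵐ[μ] μ[R|𝒱])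
    (hY : AEStronglyMeasurable[ℋ] Y μ) (hYint : Integrable Y μ)
    (hmWV : mWV =ᵐ[μ] μ[Y|𝒲]) (hyV : yV =ᵐ[μ] μ[Y|𝒱])
    (hs : StronglyMeasurable[𝒱] s) (hs_bdd : ∀ᵐ ω ∂μ, ‖s ω‖ ≤ C) :
    ∫ ω, s ω * (R ω * (Y ω - yV ω) + (1 - R ω) * (yV ω - mWV ω)) ∂μ = 0 := by
  have h𝒲 : 𝒲 ≤ mΩ := h𝒲ℋ.trans hℋ
  have h𝒱 : 𝒱 ≤ mΩ := h𝒱𝒲.trans h𝒲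
  set D₁ : Ω → ℝ := fun ω => Y ω - yV ω
  set D₂ : Ω → ℝ := fun ω => mWV ω - yV ω
  have hmWV_int : Integrable mWV μ := integrable_condExp.congr hmWV.symm
  have hyV_int : Integrable yV μ := integrable_condExp.congr hyV.symm
  have hD₁_int : Integrable D₁ μ := hYint.sub hyV_int
  have hD₂_int : Integrable D₂ μ := hmWV_int.sub hyV_int
  have hD₁ : μ[D₁|𝒱] =ᵐ[μ] 0 := condExp_sub_eq_zero_of_ae_eq_condExp h𝒱 hYint hyV
  have hD₂ : μ[D₂|𝒱] =ᵐ[μ] 0 := by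
    refine condExp_sub_eq_zero_of_ae_eq_condExp h𝒱 hmWV_int (hyV.trans ?_)
    exact ((condExp_congr_ae hmWV).trans (condExp_condExp_of_le h𝒱𝒲 h𝒲)).symm
  have hs_meas : AEStronglyMeasurable s μ := (hs.mono h𝒱).aestronglyMeasurable
  have hsD_int : Integrable (s * (D₁ + D₂)) μ := (hD₁_int.add hD₂_int).bdd_mul hs_meas hs_bdd
  have hsD_meas : AEStronglyMeasurable[ℋ] (s * (D₁ + D₂)) μ := by
    have hyV_meas : AEStronglyMeasurable[ℋ] yV μ :=
      (stronglyMeasurable_condExp.aestronglyMeasurable.congr hyV.symm).mono (h𝒱𝒲.trans h𝒲ℋ)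
    have hmWV_meas : AEStronglyMeasurable[ℋ] mWV μ :=
      (stronglyMeasurable_condExp.aestronglyMeasurable.congr hmWV.symm).mono h𝒲ℋ
    exact (hs.mono (h𝒱𝒲.trans h𝒲ℋ)).aestronglyMeasurable.mul
      ((hY.sub hyV_meas).add (hmWV_meas.sub hyV_meas))
  have hsD : μ[s * (D₁ + D₂)|𝒱] =ᵐ[μ] 0 := by
    filter_upwards [condExp_mul_of_stronglyMeasurable_left hs hsD_int (hD₁_int.add hD₂_int),
      condExp_add hD₁_int hD₂_int 𝒱, hD₁, hD₂] with ω h h_add h₁ h₂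
    simp [h, h_add, h₁, h₂]
  have h_split : (fun ω => s ω * (R ω * (Y ω - yV ω) + (1 - R ω) * (yV ω - mWV ω))) =
      fun ω => (s * (D₁ + D₂)) ω * R ω - s ω * D₂ ω := by
    funext ω
    simp only [D₁, D₂, Pi.mul_apply, Pi.add_apply]
    ring
  have hsDR_int : Integrable (fun ω => (s * (D₁ + D₂)) ω * R ω) μ :=
    hsD_int.mul_bdd hRint.aestronglyMeasurable (hR_bdd.mono fun ω h => by rwa [Real.norm_eq_abs])
  rw [h_split, integral_sub hsDR_int (hD₂_int.bdd_mul hs_meas hs_bdd),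
    integral_mul_eq_zero_of_condExp_eq_condExp h𝒱 hℋ hsD_meas hsD_int hsD hRint hR_bdd hR_cond,
    integral_mul_eq_zero_of_condExp_eq_zero h𝒱 hs hs_bdd hD₂_int hD₂, sub_zero]

theorem stmt_7_general {Ω : Type*} [MeasurableSpace Ω] (μ : Measure Ω) [IsProbabilityMeasure μ]
    (R Y W V : Ω → ℝ) (hR : Measurable R) (hY : Measurable Y)
    (hW : Measurable W) (hV : Measurable V)
    (hR01 : ∀ ω, R ω = 0 ∨ R ω = 1)
    (hYint : Integrable Y μ)
    (hCI : CondIndepGiven μ (MeasurableSpace.comap V inferInstance)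
      (fun ω => (Y ω, W ω)) R)
    (mWV : Ω → ℝ)
    (hmWVver : mWV =ᵐ[μ]
      μ[Y | MeasurableSpace.comap (fun ω => (W ω, V ω)) inferInstance])
    (yV : Ω → ℝ)
    (hyVver : yV =ᵐ[μ] μ[Y | MeasurableSpace.comap V inferInstance])
    (t : ℝ → ℝ) (ht : Measurable t) (htb : ∃ C, ∀ x, |t x| ≤ C) :
    ∫ ω, t (V ω) * (R ω * (Y ω - yV ω) + (1 - R ω) * (yV ω - mWV ω)) ∂μ = 0 := by
  obtain ⟨C, hC⟩ := htb
  have hR_bdd : ∀ᵐ ω ∂μ, |R ω| ≤ 1 := ae_of_all _ fun ω => by rcases hR01 ω with h | h <;> simp [h]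
  have hYW : Measurable fun ω => (Y ω, W ω) := hY.prodMk hW
  have hY_meas : Measurable[MeasurableSpace.comap (fun ω => (Y ω, W ω)) inferInstance] Y :=
    measurable_fst.comp (comap_measurable _)
  have hW_meas : Measurable[MeasurableSpace.comap (fun ω => (Y ω, W ω)) inferInstance] W :=
    measurable_snd.comp (comap_measurable _)
  have hV_le_WV : MeasurableSpace.comap V inferInstance ≤
      MeasurableSpace.comap (fun ω => (W ω, V ω)) inferInstance :=
    le_sup_right.trans (MeasurableSpace.comap_prodMk W V).ge
  have hWV_le : MeasurableSpace.comap (fun ω => (W ω, V ω)) inferInstance ≤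
      MeasurableSpace.comap V inferInstance ⊔
        MeasurableSpace.comap (fun ω => (Y ω, W ω)) inferInstance :=
    (MeasurableSpace.comap_prodMk W V).le.trans
      (sup_le (le_sup_of_le_right hW_meas.comap_le) le_sup_left)
  have hY_sm : StronglyMeasurable[MeasurableSpace.comap V inferInstance ⊔
      MeasurableSpace.comap (fun ω => (Y ω, W ω)) inferInstance] Y :=
    hY_meas.stronglyMeasurable.mono le_sup_right
  exact integral_mul_estimatingEquation_eq_zero hV_le_WV hWV_le (sup_le hV.comap_le hYW.comap_le)
    (integrable_of_eq_zero_or_eq_one hR hR01) hR_bdd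
    (condExp_sup_comap_eq_of_condIndepGiven hV.comap_le hYW hR hR01 hCI)
    hY_sm.aestronglyMeasurable hYint hmWVver hyVver
    (ht.comp (comap_measurable V)).stronglyMeasurable (ae_of_all _ fun ω => hC (V ω))

/-- Population version of the estimating equation (2) at the true parameter:
if `(Y,W) ⟂ R | σ(V)`, `m(W,V)` is a `σ(W,V)`-measurable version of `E[Y | σ(W,V)]`,
and `ȳ(V)` is a `σ(V)`-measurable version of `E[Y | σ(V)]`, then for every bounded
measurable `t`, `E[t(V)·(R·(Y - ȳ(V)) + (1-R)·(ȳ(V) - m(W,V)))] = 0`. -/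
theorem stmt_7 {Ω : Type*} [MeasurableSpace Ω] (μ : Measure Ω) [IsProbabilityMeasure μ]
    (R Y W V : Ω → ℝ) (hR : Measurable R) (hY : Measurable Y)
    (hW : Measurable W) (hV : Measurable V)
    (hR01 : ∀ ω, R ω = 0 ∨ R ω = 1)
    (hYint : Integrable Y μ)
    (hCI : CondIndepGiven μ (MeasurableSpace.comap V inferInstance)
      (fun ω => (Y ω, W ω)) R)
    (mWV : Ω → ℝ)
    (hmWVmeas :
      Measurable[MeasurableSpace.comap (fun ω => (W ω, V ω)) inferInstance] mWV)
    (hmWVver : mWV =ᵐ[μ]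
      μ[Y | MeasurableSpace.comap (fun ω => (W ω, V ω)) inferInstance])
    (hmWVint : Integrable mWV μ)
    (yV : Ω → ℝ)
    (hyVmeas : Measurable[MeasurableSpace.comap V inferInstance] yV)
    (hyVver : yV =ᵐ[μ] μ[Y | MeasurableSpace.comap V inferInstance])
    (t : ℝ → ℝ) (ht : Measurable t) (htb : ∃ C, ∀ x, |t x| ≤ C) :
    ∫ ω, t (V ω) * (R ω * (Y ω - yV ω) + (1 - R ω) * (yV ω - mWV ω)) ∂μ = 0 :=
  stmt_7_general μ R Y W V hR hY hW hV hR01 hYint hCI mWV hmWVver yV hyVver t ht htb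
end

section
/- Let R, Y, W, V be random variables on a probability space (Ω, ℱ, P) with R taking values in {0,1}, let π(V) be a σ(V)-measurable version of E[R | σ(V)], and suppose there is δ ∈ (0,1) with δ ≤ π(V) ≤ 1 − δ almost surely. Suppose (Y,W) is conditionally independent of R given σ(V). Let u, s be measurable functions with U := u(Y,V) and S := s(W,V) square-integrable, let E[U | σ(V)] and E[S | σ(V)] be σ(V)-measurable versions of their conditional expectations, and let m be a bounded measurable function of V. Define Q := (R/π(V))·(U − E[U | σ(V)]) − ((1−R)/(1−π(V)))·(S − E[S | σ(V)]) and Ψ := ((R − π(V)) / (π(V)(1 − π(V)))) · m(V). Then E[Q · Ψ] = 0. -/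
/-!
Since `R ∈ {0, 1}`, pointwise `Q Ψ = R (U - E[U|V]) m / π² + (1 - R) (S - E[S|V]) m / (1 - π)²`.
Conditional independence makes `π` a version of `E[R | Y, W, V]` as well: `R` and `π` have the
same integral over every set `{(Y, W) ∈ A, V ∈ C}`, and these sets form a π-system generating
`σ(Y, W, V)`. Conditioning on `σ(Y, W, V)` therefore replaces `R` by `π` and `1 - R` by `1 - π`,
which leaves `E[(U - E[U|V]) m / π] + E[(S - E[S|V]) m / (1 - π)]`; both terms vanish because
`m / π` and `m / (1 - π)` are bounded and `σ(V)`-measurable.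
-/

open MeasureTheory

theorem norm_div_le_div_of_le {a b C δ : ℝ} (ha : ‖a‖ ≤ C) (hδ : 0 < δ) (hb : δ ≤ b) :
    ‖a / b‖ ≤ C / δ := by
  rw [Real.norm_eq_abs] at ha ⊢
  rw [abs_div, abs_of_nonneg (hδ.le.trans hb)]
  exact div_le_div₀ ((abs_nonneg a).trans ha) ha hδ hb

theorem influence_mul_score_eq {r p a b c : ℝ} (hr : r = 0 ∨ r = 1) (hp : p ≠ 0)
    (hp' : 1 - p ≠ 0) :
    (r / p * a - (1 - r) / (1 - p) * b) * ((r - p) / (p * (1 - p)) * c) =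
      r * (a * (c / p / p)) + (1 - r) * (b * (c / (1 - p) / (1 - p))) := by
  rcases hr with rfl | rfl <;> field_simp <;> ring

namespace MeasureTheory

variable {Ω : Type*} {m m₂ m₀ : MeasurableSpace Ω} {μ : Measure[m₀] Ω}

section PiSystem

variable {E : Type*} [NormedAddCommGroup E] [NormedSpace ℝ E]

theorem setIntegral_eq_setIntegral_of_isPiSystem {s : Set (Set Ω)} (hm : m ≤ m₀)
    (h_eq : m = MeasurableSpace.generateFrom s) (h_pi : IsPiSystem s) {f g : Ω → E}
    (hf : Integrable f μ) (hg : Integrable g μ)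
    (basic : ∀ t ∈ s, ∫ ω in t, f ω ∂μ = ∫ ω in t, g ω ∂μ)
    (h_univ : ∫ ω, f ω ∂μ = ∫ ω, g ω ∂μ) :
    ∀ t, MeasurableSet[m] t → ∫ ω in t, f ω ∂μ = ∫ ω in t, g ω ∂μ := by
  refine MeasurableSpace.induction_on_inter h_eq h_pi (by simp) basic ?_ ?_
  · intro t ht h_t
    rw [← integral_add_compl (hm t ht) hf, ← integral_add_compl (hm t ht) hg, h_t] at h_univ
    exact add_left_cancel h_univ
  · intro t ht_disj ht h_t
    have ht₀ i : MeasurableSet (t i) := hm _ (ht i)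
    rw [integral_iUnion ht₀ ht_disj hf.integrableOn, integral_iUnion ht₀ ht_disj hg.integrableOn]
    exact tsum_congr h_t

theorem ae_eq_condExp_of_setIntegral_eq_of_isPiSystem [CompleteSpace E] [IsFiniteMeasure μ]
    {s : Set (Set Ω)} (hm : m ≤ m₀) (h_eq : m = MeasurableSpace.generateFrom s)
    (h_pi : IsPiSystem s) {f g : Ω → E} (hf : Integrable f μ) (hg : Integrable g μ)
    (hgm : StronglyMeasurable[m] g) (basic : ∀ t ∈ s, ∫ ω in t, g ω ∂μ = ∫ ω in t, f ω ∂μ)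
    (h_univ : ∫ ω, g ω ∂μ = ∫ ω, f ω ∂μ) :
    g =ᵐ[μ] μ[f|m] :=
  ae_eq_condExp_of_forall_setIntegral_eq hm hf (fun _ _ _ => hg.integrableOn)
    (fun t ht _ => setIntegral_eq_setIntegral_of_isPiSystem hm h_eq h_pi hg hf basic h_univ t ht)
    hgm.aestronglyMeasurable

end PiSystem

theorem integral_mul_condExp_of_stronglyMeasurable_left (hm : m ≤ m₀) [SigmaFinite (μ.trim hm)]
    {f g : Ω → ℝ} (hg : StronglyMeasurable[m] g) (hgf : Integrable (g * f) μ)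
    (hf : Integrable f μ) :
    ∫ ω, g ω * f ω ∂μ = ∫ ω, g ω * μ[f|m] ω ∂μ :=
  calc ∫ ω, g ω * f ω ∂μ = ∫ ω, μ[g * f|m] ω ∂μ := (integral_condExp hm).symm
    _ = ∫ ω, g ω * μ[f|m] ω ∂μ :=
      integral_congr_ae (condExp_mul_of_stronglyMeasurable_left hg hgf hf)

theorem integral_mul_sub_condExp_eq_zero [IsFiniteMeasure μ] (hm : m ≤ m₀) {f e g : Ω → ℝ}
    {C : ℝ} (hf : Integrable f μ) (he : e =ᵐ[μ] μ[f|m]) (hg : StronglyMeasurable[m] g)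
    (hgC : ∀ᵐ ω ∂μ, ‖g ω‖ ≤ C) :
    ∫ ω, g ω * (f ω - e ω) ∂μ = 0 := by
  have hg₀ : AEStronglyMeasurable g μ := (hg.mono hm).aestronglyMeasurable
  have he_int : Integrable e μ := integrable_condExp.congr he.symm
  have hge : ∫ ω, g ω * e ω ∂μ = ∫ ω, g ω * μ[f|m] ω ∂μ :=
    integral_congr_ae (he.mono fun ω hω => congrArg (g ω * ·) hω)
  rw [integral_congr_ae (Filter.Eventually.of_forall fun ω => mul_sub (g ω) (f ω) (e ω)),
    integral_sub (hf.bdd_mul hg₀ hgC) (he_int.bdd_mul hg₀ hgC), hge,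
    integral_mul_condExp_of_stronglyMeasurable_left hm hg (hf.bdd_mul hg₀ hgC) hf, sub_self]

section Weighted

variable {ρ q X e g : Ω → ℝ} {Cρ C δ : ℝ}

theorem integrable_mul_sub_mul_div_div (hρ : AEStronglyMeasurable ρ μ)
    (hρC : ∀ᵐ ω ∂μ, ‖ρ ω‖ ≤ Cρ) (hX : Integrable X μ) (he : Integrable e μ)
    (hg : AEStronglyMeasurable g μ) (hgC : ∀ᵐ ω ∂μ, ‖g ω‖ ≤ C) (hq : AEStronglyMeasurable q μ)
    (hδ : 0 < δ) (hqδ : ∀ᵐ ω ∂μ, δ ≤ q ω) :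
    Integrable (fun ω => ρ ω * ((X ω - e ω) * (g ω / q ω / q ω))) μ := by
  have h_bound : ∀ᵐ ω ∂μ, ‖g ω / q ω / q ω‖ ≤ C / δ / δ := by
    filter_upwards [hgC, hqδ] with ω hgω hqω
    exact norm_div_le_div_of_le (norm_div_le_div_of_le hgω hδ hqω) hδ hqω
  exact ((hX.sub he).mul_bdd ((hg.div₀ hq).div₀ hq) h_bound).bdd_mul hρ hρC

theorem integral_mul_sub_condExp_mul_div_div_eq_zero [IsFiniteMeasure μ] (hm : m ≤ m₂)
    (hm₂ : m₂ ≤ m₀) (hρ : AEStronglyMeasurable ρ μ) (hρC : ∀ᵐ ω ∂μ, ‖ρ ω‖ ≤ Cρ)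
    (hρq : μ[ρ|m₂] =ᵐ[μ] q) (hq : StronglyMeasurable[m] q) (hδ : 0 < δ)
    (hqδ : ∀ᵐ ω ∂μ, δ ≤ q ω) (hX : Integrable X μ) (hXm : StronglyMeasurable[m₂] X)
    (he : e =ᵐ[μ] μ[X|m]) (hem : StronglyMeasurable[m] e) (hg : StronglyMeasurable[m] g)
    (hgC : ∀ᵐ ω ∂μ, ‖g ω‖ ≤ C) :
    ∫ ω, ρ ω * ((X ω - e ω) * (g ω / q ω / q ω)) ∂μ = 0 := by
  set G : Ω → ℝ := fun ω => (X ω - e ω) * (g ω / q ω / q ω)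
  have hG : StronglyMeasurable[m₂] G :=
    (hXm.sub (hem.mono hm)).mul (((hg.mono hm).div (hq.mono hm)).div (hq.mono hm))
  have hmm₀ := hm.trans hm₂
  have hρG : Integrable (fun ω => ρ ω * G ω) μ :=
    integrable_mul_sub_mul_div_div hρ hρC hX (integrable_condExp.congr he.symm)
      (hg.mono hmm₀).aestronglyMeasurable hgC (hq.mono hmm₀).aestronglyMeasurable hδ hqδ
  have hgq_bound : ∀ᵐ ω ∂μ, ‖g ω / q ω‖ ≤ C / δ := by
    filter_upwards [hgC, hqδ] with ω hgω hqω
    exact norm_div_le_div_of_le hgω hδ hqω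
  calc ∫ ω, ρ ω * G ω ∂μ = ∫ ω, G ω * ρ ω ∂μ := by simp_rw [mul_comm (ρ _)]
    _ = ∫ ω, G ω * μ[ρ|m₂] ω ∂μ :=
      integral_mul_condExp_of_stronglyMeasurable_left hm₂ hG
        (hρG.congr (.of_forall fun _ => mul_comm _ _))
        (.of_bound hρ Cρ hρC)
    _ = ∫ ω, g ω / q ω * (X ω - e ω) ∂μ := by
      refine integral_congr_ae ?_
      filter_upwards [hρq, hqδ] with ω hρω hqω
      have : q ω ≠ 0 := (hδ.trans_le hqω).ne'
      simp only [G, hρω]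
      field_simp
    _ = 0 := integral_mul_sub_condExp_eq_zero hmm₀ hX he (hg.div hq) hgq_bound

end Weighted

theorem integral_influence_mul_score_eq_zero [IsFiniteMeasure μ] (hm : m ≤ m₂) (hm₂ : m₂ ≤ m₀)
    {R π X₁ X₀ e₁ e₀ g : Ω → ℝ} {δ C : ℝ} (hR : Measurable[m₀] R)
    (hR01 : ∀ ω, R ω = 0 ∨ R ω = 1) (hRπ : μ[R|m₂] =ᵐ[μ] π) (hπ : StronglyMeasurable[m] π)
    (hδ : 0 < δ) (hπδ : ∀ᵐ ω ∂μ, δ ≤ π ω ∧ π ω ≤ 1 - δ)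
    (hX₁ : Integrable X₁ μ) (hX₁m : StronglyMeasurable[m₂] X₁) (he₁ : e₁ =ᵐ[μ] μ[X₁|m])
    (he₁m : StronglyMeasurable[m] e₁)
    (hX₀ : Integrable X₀ μ) (hX₀m : StronglyMeasurable[m₂] X₀) (he₀ : e₀ =ᵐ[μ] μ[X₀|m])
    (he₀m : StronglyMeasurable[m] e₀)
    (hg : StronglyMeasurable[m] g) (hgC : ∀ᵐ ω ∂μ, ‖g ω‖ ≤ C) :
    ∫ ω, (R ω / π ω * (X₁ ω - e₁ ω) - (1 - R ω) / (1 - π ω) * (X₀ ω - e₀ ω)) *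
      ((R ω - π ω) / (π ω * (1 - π ω)) * g ω) ∂μ = 0 := by
  have hmm₀ := hm.trans hm₂
  have hR_le : ∀ᵐ ω ∂μ, ‖R ω‖ ≤ 1 := .of_forall fun ω => by rcases hR01 ω with h | h <;> simp [h]
  have h1R_le : ∀ᵐ ω ∂μ, ‖1 - R ω‖ ≤ 1 :=
    .of_forall fun ω => by rcases hR01 ω with h | h <;> simp [h]
  have h1R : AEStronglyMeasurable (fun ω => 1 - R ω) μ :=
    (measurable_const.sub hR).aestronglyMeasurable
  have h1π : StronglyMeasurable[m] fun ω => 1 - π ω := stronglyMeasurable_const.sub hπ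
  have h1Rπ : μ[fun ω => 1 - R ω | m₂] =ᵐ[μ] fun ω => 1 - π ω := by
    have hR_int : Integrable R μ := .of_bound hR.aestronglyMeasurable 1 hR_le
    filter_upwards [condExp_sub (integrable_const 1) hR_int m₂, hRπ] with ω h1 h2
    rw [condExp_const hm₂, Pi.sub_apply, h2] at h1
    exact h1
  have hπ_lower : ∀ᵐ ω ∂μ, δ ≤ π ω := hπδ.mono fun _ h => h.1
  have h1π_lower : ∀ᵐ ω ∂μ, δ ≤ 1 - π ω := hπδ.mono fun _ h => by linarith [h.2]
  have h_pointwise : ∀ᵐ ω ∂μ,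
      (R ω / π ω * (X₁ ω - e₁ ω) - (1 - R ω) / (1 - π ω) * (X₀ ω - e₀ ω)) *
        ((R ω - π ω) / (π ω * (1 - π ω)) * g ω) =
      R ω * ((X₁ ω - e₁ ω) * (g ω / π ω / π ω)) +
        (1 - R ω) * ((X₀ ω - e₀ ω) * (g ω / (1 - π ω) / (1 - π ω))) := by
    filter_upwards [hπ_lower, h1π_lower] with ω h1 h2
    exact influence_mul_score_eq (hR01 ω) (hδ.trans_le h1).ne' (hδ.trans_le h2).ne'
  rw [integral_congr_ae h_pointwise, integral_add
    (integrable_mul_sub_mul_div_div hR.aestronglyMeasurable hR_le hX₁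
      (integrable_condExp.congr he₁.symm) (hg.mono hmm₀).aestronglyMeasurable hgC
      (hπ.mono hmm₀).aestronglyMeasurable hδ hπ_lower)
    (integrable_mul_sub_mul_div_div h1R h1R_le hX₀ (integrable_condExp.congr he₀.symm)
      (hg.mono hmm₀).aestronglyMeasurable hgC (h1π.mono hmm₀).aestronglyMeasurable hδ h1π_lower),
    integral_mul_sub_condExp_mul_div_div_eq_zero hm hm₂ hR.aestronglyMeasurable hR_le hRπ hπ hδ
      hπ_lower hX₁ hX₁m he₁ he₁m hg hgC,
    integral_mul_sub_condExp_mul_div_div_eq_zero hm hm₂ h1R h1R_le h1Rπ h1π hδ h1π_lower hX₀ hX₀m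
      he₀ he₀m hg hgC, add_zero]

end MeasureTheory

namespace CondIndepGiven

variable {Ω α : Type*} {m m₀ : MeasurableSpace Ω} [MeasurableSpace α] {μ : Measure[m₀] Ω}
  {T : Ω → α} {R : Ω → ℝ}

theorem condExp_indicator_mul (hCI : CondIndepGiven μ m T R) (hR01 : ∀ ω, R ω = 0 ∨ R ω = 1)
    {A : Set α} (hA : MeasurableSet A) :
    μ[fun ω => A.indicator (fun _ => (1 : ℝ)) (T ω) * R ω | m] =ᵐ[μ]
      fun ω => μ[fun ω => A.indicator (fun _ => (1 : ℝ)) (T ω) | m] ω * μ[R | m] ω := by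
  have hR ω : ({1} : Set ℝ).indicator (fun _ => (1 : ℝ)) (R ω) = R ω := by
    rcases hR01 ω with h | h <;> simp [h]
  simpa only [hR] using hCI A {1} hA (measurableSet_singleton 1)

theorem setIntegral_condExp_preimage_inter [IsFiniteMeasure μ] (hm : m ≤ m₀)
    (hCI : CondIndepGiven μ m T R) (hT : Measurable T) (hR : Measurable R)
    (hR01 : ∀ ω, R ω = 0 ∨ R ω = 1) {A : Set α} (hA : MeasurableSet A) {t : Set Ω}
    (ht : MeasurableSet[m] t) :
    ∫ ω in T ⁻¹' A ∩ t, μ[R | m] ω ∂μ = ∫ ω in T ⁻¹' A ∩ t, R ω ∂μ := by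
  set I : Ω → ℝ := fun ω => A.indicator (fun _ => (1 : ℝ)) (T ω)
  have h_restrict (F : Ω → ℝ) : ∫ ω in T ⁻¹' A ∩ t, F ω ∂μ = ∫ ω in t, I ω * F ω ∂μ := by
    rw [Set.inter_comm, ← setIntegral_indicator (hT hA)]
    congr with ω
    by_cases h : T ω ∈ A <;> simp [I, h]
  have hI : Measurable I := (measurable_const.indicator hA).comp hT
  have hI_le : ∀ᵐ ω ∂μ, ‖I ω‖ ≤ 1 :=
    .of_forall fun ω => by by_cases h : T ω ∈ A <;> simp [I, h]
  have hI_int : Integrable I μ := .of_bound hI.aestronglyMeasurable 1 hI_le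
  have hR_int : Integrable R μ := .of_bound hR.aestronglyMeasurable 1
    (.of_forall fun ω => by rcases hR01 ω with h | h <;> simp [h])
  have hIR_int : Integrable (I * R) μ := hR_int.bdd_mul hI.aestronglyMeasurable hI_le
  have hIER_int : Integrable (I * μ[R | m]) μ :=
    integrable_condExp.bdd_mul hI.aestronglyMeasurable hI_le
  rw [h_restrict, h_restrict]
  calc ∫ ω in t, I ω * μ[R | m] ω ∂μ = ∫ ω in t, μ[I * μ[R | m] | m] ω ∂μ :=
        (setIntegral_condExp hm hIER_int ht).symm
    _ = ∫ ω in t, μ[I | m] ω * μ[R | m] ω ∂μ :=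
        setIntegral_congr_ae (hm t ht) ((condExp_mul_of_stronglyMeasurable_right
          stronglyMeasurable_condExp hIER_int hI_int).mono fun _ h _ => h)
    _ = ∫ ω in t, μ[I * R | m] ω ∂μ :=
        setIntegral_congr_ae (hm t ht) ((condExp_indicator_mul hCI hR01 hA).mono
          fun _ h _ => h.symm)
    _ = ∫ ω in t, I ω * R ω ∂μ := setIntegral_condExp hm hIR_int ht

theorem condExp_comap_prodMk_ae_eq [IsFiniteMeasure μ] {β : Type*} [MeasurableSpace β]
    {V : Ω → β} (hCI : CondIndepGiven μ (MeasurableSpace.comap V inferInstance) T R)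
    (hT : Measurable T) (hV : Measurable V) (hR : Measurable R)
    (hR01 : ∀ ω, R ω = 0 ∨ R ω = 1) :
    μ[R | MeasurableSpace.comap (fun ω => (T ω, V ω)) inferInstance] =ᵐ[μ]
      μ[R | MeasurableSpace.comap V inferInstance] := by
  have hTV : MeasurableSpace.comap (fun ω => (T ω, V ω)) inferInstance ≤ m₀ :=
    (hT.prodMk hV).comap_le
  have hV_le : MeasurableSpace.comap V inferInstance ≤
      MeasurableSpace.comap (fun ω => (T ω, V ω)) inferInstance :=
    (measurable_snd.comp (comap_measurable fun ω => (T ω, V ω))).comap_le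
  have hR_int : Integrable R μ := .of_bound hR.aestronglyMeasurable 1
    (.of_forall fun ω => by rcases hR01 ω with h | h <;> simp [h])
  refine (ae_eq_condExp_of_setIntegral_eq_of_isPiSystem hTV ?_
    (isPiSystem_prod.comap fun ω => (T ω, V ω)) hR_int integrable_condExp
    (stronglyMeasurable_condExp.mono hV_le) ?_ (integral_condExp (hV_le.trans hTV))).symm
  · rw [← generateFrom_prod, MeasurableSpace.comap_generateFrom]
    rfl
  · rintro _ ⟨_, ⟨A, hA, C, hC, rfl⟩, rfl⟩
    rw [Set.mk_preimage_prod]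
    exact setIntegral_condExp_preimage_inter (hV_le.trans hTV) hCI hT hR hR01 hA ⟨C, hC, rfl⟩

end CondIndepGiven

/-- Orthogonality `E[Q·Ψ] = 0` of the simplified influence term `Q` and the score
component `Ψ` of a correctly specified propensity score model (final step in the
proof of Theorem 4). -/
theorem stmt_16 {Ω : Type*} [MeasurableSpace Ω] (μ : Measure Ω) [IsProbabilityMeasure μ]
    (R Y W V : Ω → ℝ) (hR : Measurable R) (hY : Measurable Y)
    (hW : Measurable W) (hV : Measurable V)
    (hR01 : ∀ ω, R ω = 0 ∨ R ω = 1)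
    (πV : Ω → ℝ)
    (hπmeas : Measurable[MeasurableSpace.comap V inferInstance] πV)
    (hπver : πV =ᵐ[μ] μ[R | MeasurableSpace.comap V inferInstance])
    (δ : ℝ) (hδ : δ ∈ Set.Ioo (0 : ℝ) 1)
    (hπbound : ∀ᵐ ω ∂μ, δ ≤ πV ω ∧ πV ω ≤ 1 - δ)
    (hCI : CondIndepGiven μ (MeasurableSpace.comap V inferInstance)
      (fun ω => (Y ω, W ω)) R)
    (u s : ℝ × ℝ → ℝ) (hu : Measurable u) (hs : Measurable s)
    (hU2 : MemLp (fun ω => u (Y ω, V ω)) 2 μ)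
    (hS2 : MemLp (fun ω => s (W ω, V ω)) 2 μ)
    (eU : Ω → ℝ)
    (heUmeas : Measurable[MeasurableSpace.comap V inferInstance] eU)
    (heUver : eU =ᵐ[μ]
      μ[fun ω => u (Y ω, V ω) | MeasurableSpace.comap V inferInstance])
    (eS : Ω → ℝ)
    (heSmeas : Measurable[MeasurableSpace.comap V inferInstance] eS)
    (heSver : eS =ᵐ[μ]
      μ[fun ω => s (W ω, V ω) | MeasurableSpace.comap V inferInstance])
    (mfn : ℝ → ℝ) (hm : Measurable mfn) (hmb : ∃ C, ∀ x, |mfn x| ≤ C)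
    (Q Ψ : Ω → ℝ)
    (hQ : Q = fun ω => (R ω / πV ω) * (u (Y ω, V ω) - eU ω)
      - ((1 - R ω) / (1 - πV ω)) * (s (W ω, V ω) - eS ω))
    (hΨ : Ψ = fun ω => ((R ω - πV ω) / (πV ω * (1 - πV ω))) * mfn (V ω)) :
    ∫ ω, Q ω * Ψ ω ∂μ = 0 := by
  obtain ⟨C, hC⟩ := hmb
  have hYWV : Measurable[MeasurableSpace.comap (fun ω => ((Y ω, W ω), V ω)) inferInstance]
      fun ω => ((Y ω, W ω), V ω) := comap_measurable _
  subst hQ hΨ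
  exact integral_influence_mul_score_eq_zero (measurable_snd.comp hYWV).comap_le
    ((hY.prodMk hW).prodMk hV).comap_le hR hR01
    ((hCI.condExp_comap_prodMk_ae_eq (hY.prodMk hW) hV hR hR01).trans hπver.symm)
    hπmeas.stronglyMeasurable hδ.1 hπbound
    (hU2.integrable one_le_two)
    ((hu.comp (measurable_fst.fst.prodMk measurable_snd)).comp hYWV).stronglyMeasurable
    heUver heUmeas.stronglyMeasurable
    (hS2.integrable one_le_two)
    ((hs.comp (measurable_fst.snd.prodMk measurable_snd)).comp hYWV).stronglyMeasurable
    heSver heSmeas.stronglyMeasurable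
    (hm.comp (comap_measurable V)).stronglyMeasurable (.of_forall fun ω => hC (V ω))
end
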